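/- arXiv:math/0609719 — 5 statements merged into one kernel-verified Lean document; each statement's English description precedes it below -/
import Mathlib

section
/- For all real x and real k, |cosh(x + ik)/cosh(x)| ≤ exp(-(1 - cos(2k))/(4·cosh²(x))), where cosh(x + ik) is the complex hyperbolic cosine and |·| is the complex modulus. -/
open Real Complex

theorem stmt_1 (x k : ℝ) :
    ‖Complex.cosh ((x : ℂ) + k * Complex.I) / Complex.cosh (x : ℂ)‖
      ≤ Real.exp (-(1 - Real.cos (2 * k)) / (4 * Real.cosh x ^ 2)) := by
  have hc : (0:ℝ) < Real.cosh x := Real.cosh_pos x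
  have hcosh : Complex.cosh ((x:ℂ) + k * Complex.I)
      = ((Real.cosh x * Real.cos k : ℝ) : ℂ) + ((Real.sinh x * Real.sin k : ℝ) : ℂ) * Complex.I := by
    rw [Complex.cosh_add, Complex.cosh_mul_I, Complex.sinh_mul_I]
    push_cast
    ring
  have hA2 : (‖Complex.cosh ((x:ℂ) + k * Complex.I)‖)^2
      = Real.cosh x ^ 2 * Real.cos k ^ 2 + Real.sinh x ^ 2 * Real.sin k ^ 2 := by
    rw [Complex.sq_norm, hcosh, Complex.normSq_add_mul_I]; ring
  have habs : ‖Complex.cosh (x:ℂ)‖ = Real.cosh x := by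
    rw [← Complex.ofReal_cosh, Complex.norm_real, Real.norm_eq_abs, abs_of_pos hc]
  rw [norm_div, habs, div_le_iff₀ hc]
  set e := -(1 - Real.cos (2 * k)) / (4 * Real.cosh x ^ 2) with he
  have hE : Real.exp e * Real.exp e = Real.exp (-(1 - Real.cos (2*k)) / (2 * Real.cosh x ^ 2)) := by
    rw [← Real.exp_add, he]
    ring_nf
  have hle : 1 + (-(1 - Real.cos (2*k)) / (2 * Real.cosh x ^ 2))
      ≤ Real.exp (-(1 - Real.cos (2*k)) / (2 * Real.cosh x ^ 2)) := by
    have := Real.add_one_le_exp (-(1 - Real.cos (2*k)) / (2 * Real.cosh x ^ 2))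
    linarith
  have hA0 : 0 ≤ ‖Complex.cosh ((x:ℂ) + k * Complex.I)‖ := norm_nonneg _
  have hE0 : 0 < Real.exp e := Real.exp_pos _
  have hsq : Real.sin k ^ 2 + Real.cos k ^ 2 = 1 := Real.sin_sq_add_cos_sq k
  have hc2 : Real.cos (2*k) = 2 * Real.cos k ^ 2 - 1 := Real.cos_two_mul k
  have hsh : Real.cosh x ^ 2 = Real.sinh x ^ 2 + 1 := Real.cosh_sq x
  have hB2 : (‖Complex.cosh ((x:ℂ) + k * Complex.I)‖)^2
      ≤ (Real.exp e * Real.cosh x)^2 := by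
    have key : Real.cosh x ^ 2 * (1 + (-(1 - Real.cos (2*k)) / (2 * Real.cosh x ^ 2)))
        = Real.cosh x ^ 2 - Real.sin k ^ 2 := by
      field_simp
      nlinarith
    nlinarith [sq_nonneg (Real.exp e), mul_le_mul_of_nonneg_left hle (sq_nonneg (Real.cosh x))]
  nlinarith [hB2, mul_pos hE0 hc]
end

section
/- For all real x and real k, |cosh(x - ik)/cosh(x)| ≤ exp(-(1 - cos(2k))/(4·cosh²(x))). -/
open Real Complex

theorem stmt_2 (x k : ℝ) :
    ‖Complex.cosh ((x : ℂ) - k * Complex.I) / Complex.cosh (x : ℂ)‖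
      ≤ Real.exp (-(1 - Real.cos (2 * k)) / (4 * Real.cosh x ^ 2)) := by
  have hc : (0:ℝ) < Real.cosh x := Real.cosh_pos x
  have hkey : Complex.cosh ((x : ℂ) - k * Complex.I)
      = ((Real.cosh x * Real.cos k : ℝ) : ℂ) + ((-(Real.sinh x * Real.sin k) : ℝ) : ℂ) * Complex.I := by
    rw [sub_eq_add_neg, ← neg_mul, Complex.cosh_add, Complex.cosh_mul_I, Complex.sinh_mul_I]
    rw [Complex.cos_neg, Complex.sin_neg, ← Complex.ofReal_cosh, ← Complex.ofReal_sinh,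
      ← Complex.ofReal_cos, ← Complex.ofReal_sin]
    push_cast
    ring
  have habs2 : (‖Complex.cosh ((x : ℂ) - k * Complex.I)‖)^2
      = Real.cosh x ^ 2 - Real.sin k ^ 2 := by
    rw [Complex.sq_norm, hkey, Complex.normSq_add_mul_I]
    have h1 : Real.cos k ^ 2 = 1 - Real.sin k ^ 2 := Real.cos_sq' k
    have h2 : Real.cosh x ^ 2 - Real.sinh x ^ 2 = 1 := Real.cosh_sq_sub_sinh_sq x
    nlinarith
  have hone : 1 - Real.cos (2*k) = 2 * Real.sin k ^ 2 := by
    nlinarith [Real.sin_sq_add_cos_sq k, Real.cos_two_mul k]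
  rw [norm_div, ← Complex.ofReal_cosh, Complex.norm_real, Real.norm_eq_abs, abs_of_pos hc]
  set A := ‖Complex.cosh ((x : ℂ) - k * Complex.I)‖ with hA
  have hsq : (A / Real.cosh x)^2 ≤ (Real.exp (-(1 - Real.cos (2*k)) / (4 * Real.cosh x ^ 2)))^2 := by
    rw [div_pow, habs2, ← Real.exp_nat_mul]
    have ht : -(1 - Real.cos (2*k)) / (4 * Real.cosh x ^ 2) * 2
        = -(Real.sin k ^ 2 / Real.cosh x ^ 2) := by
      rw [hone]; field_simp; ring
    have hle : (Real.cosh x ^ 2 - Real.sin k ^ 2) / Real.cosh x ^ 2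
        = -(Real.sin k ^ 2 / Real.cosh x ^ 2) + 1 := by
      field_simp; ring
    rw [hle]
    calc -(Real.sin k ^ 2 / Real.cosh x ^ 2) + 1
        ≤ Real.exp (-(Real.sin k ^ 2 / Real.cosh x ^ 2)) := Real.add_one_le_exp _
      _ = Real.exp ((2:ℕ) * (-(1 - Real.cos (2*k)) / (4 * Real.cosh x ^ 2))) := by
          rw [mul_comm]; push_cast; rw [ht]
  exact (abs_le_of_sq_le_sq' hsq (Real.exp_pos _).le).2
end

section
/- For all k ∈ [0, π], 1 - cos(2k) ≥ 2·(1 - π²/12)·min(k², (k - π)²). -/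
open Real

theorem stmt_4 (k : ℝ) (hk : k ∈ Set.Icc 0 π) :
    1 - Real.cos (2 * k) ≥ 2 * (1 - π ^ 2 / 12) * min (k ^ 2) ((k - π) ^ 2) := by
  obtain ⟨hk0, hkπ⟩ := hk
  have hcos : 1 - Real.cos (2 * k) = 2 * Real.sin k ^ 2 := by
    rw [Real.cos_two_mul']; nlinarith [Real.sin_sq_add_cos_sq k]
  -- set x = k or π - k
  set x : ℝ := if k ≤ π / 2 then k else π - k with hx
  have hsin : Real.sin k = Real.sin x := by
    by_cases h : k ≤ π / 2 <;> simp [hx, h, Real.sin_pi_sub]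
  have hmin : min (k ^ 2) ((k - π) ^ 2) ≤ x ^ 2 := by
    by_cases h : k ≤ π / 2
    · simp [hx, h, min_le_left]
    · have : (k - π) ^ 2 = x ^ 2 := by simp [hx, h]; ring
      rw [← this]; exact min_le_right _ _
  have hx0 : 0 ≤ x := by
    by_cases h : k ≤ π / 2 <;> simp [hx, h] <;> linarith
  have hxh : x ≤ π / 2 := by
    by_cases h : k ≤ π / 2 <;> simp [hx, h] <;> linarith
  have hj : 2 / π * x ≤ Real.sin x := Real.mul_le_sin hx0 hxh
  have hπ : (3 : ℝ) ≤ π := Real.pi_gt_three.le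
  have hπ' : π ≤ 3.15 := Real.pi_lt_d2.le
  have hπpos : (0 : ℝ) < π := Real.pi_pos
  have h1 : Real.sin x ^ 2 ≥ (2 / π * x) ^ 2 := by
    have h0 : 0 ≤ 2 / π * x := by positivity
    nlinarith [hj]
  have h2 : (2 / π * x) ^ 2 = 4 / π ^ 2 * x ^ 2 := by
    field_simp; ring
  have hcoef : 1 - π ^ 2 / 12 ≤ 4 / π ^ 2 := by
    rw [le_div_iff₀ (by positivity)]
    have h9 : (9:ℝ) ≤ π ^ 2 := by nlinarith
    have h99 : π ^ 2 ≤ 9.9225 := by nlinarith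
    nlinarith
  have hmin0 : 0 ≤ min (k ^ 2) ((k - π) ^ 2) := le_min (sq_nonneg _) (sq_nonneg _)
  have hsin2 : Real.sin k ^ 2 ≥ (1 - π ^ 2 / 12) * min (k ^ 2) ((k - π) ^ 2) := by
    rw [hsin]
    calc Real.sin x ^ 2 ≥ 4 / π ^ 2 * x ^ 2 := by rw [← h2]; exact h1
      _ ≥ 4 / π ^ 2 * min (k ^ 2) ((k - π) ^ 2) := by
          apply mul_le_mul_of_nonneg_left hmin (by positivity)
      _ ≥ (1 - π ^ 2 / 12) * min (k ^ 2) ((k - π) ^ 2) :=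
          mul_le_mul_of_nonneg_right hcoef hmin0
  rw [hcos]; linarith
end

section
/- For all k ∈ [-π, π], 1 - cos(2k) ≥ 2·(1 - π²/12)·min(k², (|k| - π)²). -/
open Real

theorem stmt_6 (k : ℝ) (hk : |k| ≤ π) :
    1 - Real.cos (2 * k) ≥ 2 * (1 - π ^ 2 / 12) * min (k ^ 2) ((|k| - π) ^ 2) := by
  have hpi := Real.pi_pos
  set t := min |k| (π - |k|) with ht
  have ht0 : 0 ≤ t := le_min (abs_nonneg k) (by linarith)
  have hmin : min (k ^ 2) ((|k| - π) ^ 2) = t ^ 2 := by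
    rw [ht]
    rcases le_total |k| (π - |k|) with h | h
    · rw [min_eq_left h, min_eq_left, sq_abs]
      nlinarith [abs_nonneg k, sq_abs k]
    · rw [min_eq_right h, min_eq_right]
      · ring_nf
      nlinarith [abs_nonneg k, sq_abs k]
  have hsin : 2 / π * t ≤ Real.sin |k| := by
    rcases le_total |k| (π / 2) with h | h
    · calc 2 / π * t ≤ 2 / π * |k| := by
            apply mul_le_mul_of_nonneg_left (min_le_left _ _) (by positivity)
        _ ≤ Real.sin |k| := Real.mul_le_sin (abs_nonneg k) h
    · have : Real.sin |k| = Real.sin (π - |k|) := by rw [Real.sin_pi_sub]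
      rw [this]
      calc 2 / π * t ≤ 2 / π * (π - |k|) := by
            apply mul_le_mul_of_nonneg_left (min_le_right _ _) (by positivity)
        _ ≤ Real.sin (π - |k|) := Real.mul_le_sin (by linarith) (by linarith)
  have hsink : Real.sin k ^ 2 = Real.sin |k| ^ 2 := by
    rcases abs_cases k with ⟨h, _⟩ | ⟨h, _⟩
    · rw [h]
    · rw [h, Real.sin_neg]; ring
  have hcos : 1 - Real.cos (2 * k) = 2 * Real.sin k ^ 2 := by
    rw [Real.cos_two_mul, Real.cos_sq']; ring
  have hsq : (2 / π * t) ^ 2 ≤ Real.sin |k| ^ 2 := by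
    apply sq_le_sq' _ hsin
    nlinarith [mul_nonneg (by positivity : (0:ℝ) ≤ 2 / π) ht0]
  have hconst : (1 - π ^ 2 / 12) * t ^ 2 ≤ (2 / π * t) ^ 2 := by
    have h1 : (1 - π ^ 2 / 12) ≤ (2 / π) ^ 2 := by
      rw [div_pow, le_div_iff₀ (by positivity)]
      nlinarith [Real.pi_gt_three, Real.pi_le_four, sq_nonneg (π^2 - 6)]
    nlinarith [sq_nonneg t]
  rw [hcos, hmin, hsink]
  nlinarith
end

section
/- Let x be real with cosh²(x) ≥ 1 (which always holds). For all k ∈ [0, π] and any positive integer N, the N-fold product of |cosh(x+ik)/cosh(x)| satisfies |cosh(x+ik)/cosh(x)|^N ≤ exp(-(1 - π²/12)·min(k², (k-π)²)·N/(2·cosh²(x))). -/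
open Real Complex

lemma sin_sq_key {k : ℝ} (hk : k ∈ Set.Icc 0 π) :
    (1 - π ^ 2 / 12) * min (k ^ 2) ((k - π) ^ 2) ≤ Real.sin k ^ 2 := by
  obtain ⟨hk0, hkπ⟩ := hk
  have hπ := Real.pi_pos
  have key : ∀ t : ℝ, 0 ≤ t → t ≤ π / 2 → (1 - π ^ 2 / 12) * t ^ 2 ≤ Real.sin t ^ 2 := by
    intro t ht0 ht
    have h1 : 2 / π * t ≤ Real.sin t := Real.mul_le_sin ht0 ht
    have h2 : (2 / π * t) ^ 2 ≤ Real.sin t ^ 2 := by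
      apply sq_le_sq' _ h1
      nlinarith [mul_nonneg (div_nonneg (by norm_num : (0:ℝ) ≤ 2) hπ.le) ht0]
    have h3 : (1 - π ^ 2 / 12) * t ^ 2 ≤ (2 / π * t) ^ 2 := by
      rw [mul_pow, div_pow]
      rw [div_mul_eq_mul_div, le_div_iff₀ (by positivity)]
      nlinarith [sq_nonneg (π ^ 2 - 6), sq_nonneg t, sq_nonneg (t * (π ^ 2 - 6))]
    linarith
  rcases le_or_gt k (π / 2) with h | h
  · have hmono : (1 - π ^ 2 / 12) * min (k ^ 2) ((k - π) ^ 2) ≤ (1 - π ^ 2 / 12) * k ^ 2 ∨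
        (1 - π ^ 2 / 12) ≤ 0 := by
      rcases le_or_gt (1 - π ^ 2 / 12) 0 with h' | h'
      · exact Or.inr h'
      · exact Or.inl (mul_le_mul_of_nonneg_left (min_le_left _ _) h'.le)
    rcases hmono with h' | h'
    · exact h'.trans (key k hk0 h)
    · calc (1 - π ^ 2 / 12) * min (k ^ 2) ((k - π) ^ 2) ≤ 0 :=
            mul_nonpos_of_nonpos_of_nonneg h' (le_min (sq_nonneg _) (sq_nonneg _))
        _ ≤ Real.sin k ^ 2 := sq_nonneg _
  · have hs : Real.sin k = Real.sin (π - k) := (Real.sin_pi_sub k).symm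
    have hkey := key (π - k) (by linarith) (by linarith)
    have heq : (k - π) ^ 2 = (π - k) ^ 2 := by ring
    rcases le_or_gt (1 - π ^ 2 / 12) 0 with h' | h'
    · calc (1 - π ^ 2 / 12) * min (k ^ 2) ((k - π) ^ 2) ≤ 0 :=
            mul_nonpos_of_nonpos_of_nonneg h' (le_min (sq_nonneg _) (sq_nonneg _))
        _ ≤ Real.sin k ^ 2 := sq_nonneg _
    · have : min (k ^ 2) ((k - π) ^ 2) ≤ (π - k) ^ 2 := heq ▸ min_le_right _ _
      rw [hs]
      calc (1 - π ^ 2 / 12) * min (k ^ 2) ((k - π) ^ 2)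
          ≤ (1 - π ^ 2 / 12) * (π - k) ^ 2 := mul_le_mul_of_nonneg_left this h'.le
        _ ≤ Real.sin (π - k) ^ 2 := hkey

theorem stmt_7 (x k : ℝ) (hk : k ∈ Set.Icc 0 π) (N : ℕ) (hN : 0 < N) :
    ‖Complex.cosh ((x : ℂ) + k * Complex.I) / Complex.cosh (x : ℂ)‖ ^ N
      ≤ Real.exp (-(1 - π ^ 2 / 12) * min (k ^ 2) ((k - π) ^ 2) * N / (2 * Real.cosh x ^ 2)) := by
  have hc1 : (1 : ℝ) ≤ Real.cosh x := Real.one_le_cosh x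
  have hc0 : (0 : ℝ) < Real.cosh x := by linarith
  have hz : Complex.cosh ((x : ℂ) + k * Complex.I)
      = ((Real.cosh x * Real.cos k : ℝ) : ℂ) + ((Real.sinh x * Real.sin k : ℝ) : ℂ) * Complex.I := by
    rw [Complex.cosh_add, Complex.cosh_mul_I, Complex.sinh_mul_I, ← Complex.ofReal_cosh,
      ← Complex.ofReal_sinh, ← Complex.ofReal_cos, ← Complex.ofReal_sin]
    push_cast; ring
  have habs2 : ‖Complex.cosh ((x : ℂ) + k * Complex.I)‖ ^ 2
      = Real.cosh x ^ 2 - Real.sin k ^ 2 := by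
    rw [hz, Complex.norm_add_mul_I, Real.sq_sqrt (by positivity)]
    have hpyth : Real.sin k ^ 2 + Real.cos k ^ 2 = 1 := Real.sin_sq_add_cos_sq k
    have hhyp : Real.cosh x ^ 2 - Real.sinh x ^ 2 = 1 := Real.cosh_sq_sub_sinh_sq x
    nlinarith
  have habsc : ‖Complex.cosh (x : ℂ)‖ = Real.cosh x := by
    rw [← Complex.ofReal_cosh, Complex.norm_real, Real.norm_eq_abs, abs_of_pos hc0]
  set r : ℝ := ‖Complex.cosh ((x : ℂ) + k * Complex.I) / Complex.cosh (x : ℂ)‖ with hr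
  have hr0 : 0 ≤ r := norm_nonneg _
  have hr2 : r ^ 2 = 1 - Real.sin k ^ 2 / Real.cosh x ^ 2 := by
    rw [hr, norm_div, div_pow, habs2, habsc]
    field_simp
  have hsin1 : Real.sin k ^ 2 ≤ Real.cosh x ^ 2 := by
    nlinarith [Real.neg_one_le_sin k, Real.sin_le_one k]
  have hstep : r ≤ Real.exp (-(Real.sin k ^ 2 / Real.cosh x ^ 2) / 2) := by
    have h1 : r ^ 2 ≤ Real.exp (-(Real.sin k ^ 2 / Real.cosh x ^ 2)) := by
      rw [hr2]
      have := Real.add_one_le_exp (-(Real.sin k ^ 2 / Real.cosh x ^ 2))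
      linarith
    have hsq : Real.exp (-(Real.sin k ^ 2 / Real.cosh x ^ 2))
        = Real.exp (-(Real.sin k ^ 2 / Real.cosh x ^ 2) / 2) ^ 2 := by
      rw [← Real.exp_nat_mul]; push_cast; ring_nf
    rw [hsq] at h1
    have := Real.sqrt_le_sqrt h1
    rwa [Real.sqrt_sq hr0, Real.sqrt_sq (Real.exp_pos _).le] at this
  have hfinal : r ^ N ≤ Real.exp (-(Real.sin k ^ 2 / Real.cosh x ^ 2) / 2 * N) := by
    calc r ^ N ≤ Real.exp (-(Real.sin k ^ 2 / Real.cosh x ^ 2) / 2) ^ N :=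
          pow_le_pow_left₀ hr0 hstep N
      _ = Real.exp (-(Real.sin k ^ 2 / Real.cosh x ^ 2) / 2 * N) := by
          rw [← Real.exp_nat_mul]; ring_nf
  refine hfinal.trans (Real.exp_le_exp.2 ?_)
  have hkey := sin_sq_key hk
  have hN0 : (0 : ℝ) ≤ (N : ℝ) := Nat.cast_nonneg N
  have h2c : (0:ℝ) < 2 * Real.cosh x ^ 2 := by positivity
  rw [le_div_iff₀ h2c]
  have hident : -(Real.sin k ^ 2 / Real.cosh x ^ 2) / 2 * N * (2 * Real.cosh x ^ 2)
      = -(Real.sin k ^ 2 * N) := by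
    field_simp
  rw [hident]
  nlinarith [mul_le_mul_of_nonneg_right hkey hN0]
end
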